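/- arXiv:1807.06921 — 5 statements merged into one kernel-verified Lean document; each statement's English description precedes it below -/
import Mathlib

section
/- In a path with n nodes all having threshold 1, for any time bound λ ≥ 1, the minimum total incentive needed so that every node is influenced within λ rounds equals ⌈n/(2λ+1)⌉. -/
open Finset

/-- Path adjacency on ℕ: `u` and `v` are consecutive. -/
def pAdj (u v : ℕ) : Prop := u + 1 = v ∨ v + 1 = u

instance : DecidableRel pAdj := fun u v => by unfold pAdj; infer_instance

/-- Influence process on the node set `S` of a path, thresholds `t`, incentives `p`:
at round 0 exactly the nodes with `p v = t v` are influenced; afterwards a node is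
influenced once the number of already influenced neighbours reaches `t v - p v`. -/
def infl (S : Finset ℕ) (t p : ℕ → ℕ) : ℕ → Finset ℕ
  | 0 => S.filter fun v => p v = t v
  | ℓ + 1 => infl S t p ℓ ∪ S.filter fun v =>
      t v - p v ≤ ((infl S t p ℓ).filter fun u => pAdj u v).card

/-!
With threshold 1 and incentives in `{0, 1}`, influence spreads one step along the path per
round from the nodes with incentive 1, so everything is influenced within `λ` rounds exactly
when those nodes form a distance-`λ` dominating set of the path. Each node dominates at most
`2λ + 1` nodes, and the nodes `λ, 3λ + 1, 5λ + 2, …` (the last one clamped to `n - 1`) attain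
the resulting bound `⌈n / (2λ + 1)⌉`.
-/

def IsDistDominating (ℓ n : ℕ) (T : Finset ℕ) : Prop :=
  ∀ v < n, ∃ s ∈ T, v ≤ s + ℓ ∧ s ≤ v + ℓ

section Influence

variable {n : ℕ} {p : ℕ → ℕ}

lemma one_sub_le_card_adj_iff (I : Finset ℕ) (v : ℕ) (hpv : p v ≤ 1) :
    1 - p v ≤ (I.filter fun u => pAdj u v).card ↔ p v = 1 ∨ ∃ u ∈ I, pAdj u v := by
  rcases Nat.le_one_iff_eq_zero_or_eq_one.mp hpv with h | h
  · simp [h, Nat.one_le_iff_ne_zero]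
  · simp [h]

theorem mem_infl_one_iff (hp : ∀ v < n, p v ≤ 1) (ℓ v : ℕ) :
    v ∈ infl (range n) (fun _ => 1) p ℓ ↔
      v < n ∧ ∃ s < n, p s = 1 ∧ v ≤ s + ℓ ∧ s ≤ v + ℓ := by
  induction ℓ generalizing v with
  | zero =>
    simp only [infl, mem_filter, mem_range]
    constructor
    · rintro ⟨hv, hpv⟩
      exact ⟨hv, v, hv, hpv, by omega, by omega⟩
    · rintro ⟨hv, s, -, hps, h₁, h₂⟩
      obtain rfl : s = v := by omega
      exact ⟨hv, hps⟩
  | succ ℓ ih =>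
    simp only [infl, mem_union, mem_filter, mem_range]
    constructor
    · rintro (hv | ⟨hv, hreach⟩)
      · obtain ⟨hv, s, hs, hps, h₁, h₂⟩ := (ih v).mp hv
        exact ⟨hv, s, hs, hps, by omega, by omega⟩
      rcases (one_sub_le_card_adj_iff _ v (hp v hv)).mp hreach with hpv | ⟨u, hu, hadj⟩
      · exact ⟨hv, v, hv, hpv, by omega, by omega⟩
      · obtain ⟨-, s, hs, hps, h₁, h₂⟩ := (ih u).mp hu
        exact ⟨hv, s, hs, hps, by unfold pAdj at hadj; omega, by unfold pAdj at hadj; omega⟩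
    · rintro ⟨hv, s, hs, hps, h₁, h₂⟩
      by_cases hnear : v ≤ s + ℓ ∧ s ≤ v + ℓ
      · exact Or.inl ((ih v).mpr ⟨hv, s, hs, hps, hnear⟩)
      refine Or.inr ⟨hv, (one_sub_le_card_adj_iff _ v (hp v hv)).mpr (Or.inr ?_)⟩
      -- the neighbour of `v` on the side of `s` is reached one round earlier
      obtain ⟨u, hu, hadj⟩ : ∃ u, u < n ∧ u ≤ s + ℓ ∧ s ≤ u + ℓ ∧ pAdj u v := by
        rcases Nat.lt_or_ge s v with hsv | hsv
        · exact ⟨v - 1, by omega, by omega, by omega, by unfold pAdj; omega⟩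
        · exact ⟨v + 1, by omega, by omega, by omega, by unfold pAdj; omega⟩
      exact ⟨u, (ih u).mpr ⟨hu, s, hs, hps, hadj.1, hadj.2.1⟩, hadj.2.2⟩

theorem infl_one_eq_range_iff (hp : ∀ v < n, p v ≤ 1) (ℓ : ℕ) :
    infl (range n) (fun _ => 1) p ℓ = range n ↔
      IsDistDominating ℓ n ((range n).filter (p · = 1)) := by
  simp only [Finset.ext_iff, mem_infl_one_iff hp, mem_range, IsDistDominating, mem_filter, and_assoc]
  exact ⟨fun h v hv => ((h v).mpr hv).2, fun h v => ⟨fun hv => hv.1, fun hv => ⟨hv, h v hv⟩⟩⟩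

end Influence

section Domination

variable {ℓ n : ℕ} {T : Finset ℕ}

theorem IsDistDominating.div_le_card (hT : IsDistDominating ℓ n T) :
    (n + 2 * ℓ) / (2 * ℓ + 1) ≤ #T := by
  have hcover : range n ⊆ T.biUnion fun s => Icc (s - ℓ) (s + ℓ) := by
    intro v hv
    obtain ⟨s, hs, h₁, h₂⟩ := hT v (mem_range.mp hv)
    exact mem_biUnion.mpr ⟨s, hs, mem_Icc.mpr ⟨by omega, h₁⟩⟩
  have hn : n ≤ #T * (2 * ℓ + 1) :=
    calc n = #(range n) := (card_range n).symm
      _ ≤ #(T.biUnion fun s => Icc (s - ℓ) (s + ℓ)) := card_le_card hcover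
      _ ≤ ∑ s ∈ T, #(Icc (s - ℓ) (s + ℓ)) := card_biUnion_le
      _ ≤ ∑ _s ∈ T, (2 * ℓ + 1) := sum_le_sum fun s _ => by rw [Nat.card_Icc]; omega
      _ = #T * (2 * ℓ + 1) := by rw [sum_const, smul_eq_mul]
  rw [Nat.div_le_iff_le_mul_add_pred (by omega)]
  rw [Nat.mul_comm] at hn
  omega

theorem exists_isDistDominating_card_eq (ℓ n : ℕ) :
    ∃ T ⊆ range n, IsDistDominating ℓ n T ∧ #T = (n + 2 * ℓ) / (2 * ℓ + 1) := by
  set k := 2 * ℓ + 1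
  set m := (n + 2 * ℓ) / k
  have hk : 0 < k := by omega
  have hmk : m * k ≤ n + 2 * ℓ := Nat.div_mul_le_self _ _
  have hnm : n + 2 * ℓ < m * k + k := Nat.lt_div_mul_add hk
  let f : ℕ → ℕ := fun i => min (i * k + ℓ) (n - 1)
  have hf_mono : StrictMonoOn f (range m) := by
    intro a ha b hb hab
    have hb' : b * k + k ≤ m * k := by
      rw [← Nat.succ_mul]; exact Nat.mul_le_mul_right _ (mem_range.mp hb)
    have hab' : a * k + k ≤ b * k := by
      rw [← Nat.succ_mul]; exact Nat.mul_le_mul_right _ hab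
    simp only [f]
    omega
  refine ⟨(range m).image f, ?_, ?_, ?_⟩
  · intro s hs
    obtain ⟨i, hi, rfl⟩ := mem_image.mp hs
    have hm : 0 < m := by have := mem_range.mp hi; omega
    have : k ≤ m * k := Nat.le_mul_of_pos_left k hm
    exact mem_range.mpr (by simp only [f]; omega)
  · intro v hv
    have hdiv : v / k * k ≤ v := Nat.div_mul_le_self v k
    have hvlt : v < v / k * k + k := Nat.lt_div_mul_add hk
    have him : v / k < m := by
      by_contra! h
      have : m * k ≤ v / k * k := Nat.mul_le_mul_right _ h
      omega
    exact ⟨f (v / k), mem_image_of_mem f (mem_range.mpr him), by simp only [f]; omega,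
      by simp only [f]; omega⟩
  · rw [card_image_of_injOn (by exact_mod_cast hf_mono.injOn), card_range]

end Domination

theorem path_threshold_one_min_cost_general (n lam : ℕ) :
    IsLeast {c : ℕ | ∃ p : ℕ → ℕ, (∀ v < n, p v ≤ 1) ∧
        infl (range n) (fun _ => 1) p lam = range n ∧
        c = ∑ v ∈ range n, p v}
      ((n + 2 * lam) / (2 * lam + 1)) := by
  constructor
  · obtain ⟨T, hTn, hT, hcard⟩ := exists_isDistDominating_card_eq lam n
    let p : ℕ → ℕ := fun v => if v ∈ T then 1 else 0
    have hp : ∀ v < n, p v ≤ 1 := fun v _ => by simp only [p]; split <;> omega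
    have hseeds : (range n).filter (p · = 1) = T := by
      ext v
      by_cases hv : v ∈ T
      · simp [p, hv, mem_range.mp (hTn hv)]
      · simp [p, hv]
    refine ⟨p, hp, (infl_one_eq_range_iff hp lam).mpr (hseeds ▸ hT), ?_⟩
    rw [← hcard, sum_ite_mem, inter_eq_right.mpr hTn, card_eq_sum_ones]
  · rintro c ⟨p, hp, hinfl, rfl⟩
    calc (n + 2 * lam) / (2 * lam + 1) ≤ #((range n).filter (p · = 1)) :=
          ((infl_one_eq_range_iff hp lam).mp hinfl).div_le_card
      _ = ∑ v ∈ (range n).filter (p · = 1), p v := by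
          rw [card_eq_sum_ones]; exact sum_congr rfl fun v hv => (mem_filter.mp hv).2.symm
      _ ≤ ∑ v ∈ range n, p v := sum_le_sum_of_subset (filter_subset _ _)

/-- in a path of `n` nodes, all with threshold 1, for any time bound
`lam ≥ 1` the minimum total incentive influencing everything within `lam` rounds
is `⌈n/(2lam+1)⌉`. -/
theorem path_threshold_one_min_cost (n lam : ℕ) (hlam : 1 ≤ lam) :
    IsLeast {c : ℕ | ∃ p : ℕ → ℕ, (∀ v < n, p v ≤ 1) ∧
        infl (range n) (fun _ => 1) p lam = range n ∧
        c = ∑ v ∈ range n, p v}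
      ((n + 2 * lam) / (2 * lam + 1)) :=
  path_threshold_one_min_cost_general n lam
end

section
/- Let L(j,k) be a subpath of a path L(0,n-1) with t(j)=t(k)=1 and t(i)=2 for j<i<k. For any incentive function p solving the TBI problem on L(0,n-1) (i.e., all nodes influenced within λ rounds): if both node j+1 and node k-1 receive influence from j and k respectively during the process, then Σ_{i=j+1}^{k-1} p(i) ≥ k−j−2; if exactly one of j+1, k-1 receives influence from its outer neighbor, then Σ_{i=j+1}^{k-1} p(i) ≥ k−j−1; if neither does, then Σ_{i=j+1}^{k-1} p(i) ≥ k−j. -/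
/-!
When an internal node `v` of `L(j,k)` (threshold 2) becomes influenced, the neighbours already
influenced make up for what its incentive lacks, so `2 ≤ p v + #(neighbours v receives influence
from)`. Summed over the `k - j - 1` internal nodes, each of the `k - j - 2` internal edges carries
influence in at most one direction, and the two boundary edges count exactly when `j + 1`
receives from `j`, resp. `k - 1` from `k`; hence
`k - j ≤ ∑ p + [j + 1 receives from j] + [k - 1 receives from k]`.
-/

open Finset

/-- The first round at which `v` is influenced (`sInf ∅ = 0` if never). -/
noncomputable def inflTime (S : Finset ℕ) (t p : ℕ → ℕ) (v : ℕ) : ℕ :=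
  sInf {ℓ | v ∈ infl S t p ℓ}

/-- `u` receives influence from its neighbour `w`: `w` is influenced strictly before
the round at which `u` becomes influenced. -/
noncomputable def recv (S : Finset ℕ) (t p : ℕ → ℕ) (u w : ℕ) : Prop :=
  inflTime S t p w < inflTime S t p u

noncomputable instance (S : Finset ℕ) (t p : ℕ → ℕ) (u w : ℕ) : Decidable (recv S t p u w) :=
  inferInstanceAs (Decidable (_ < _))

section InfluenceProcess

variable {S : Finset ℕ} {t p : ℕ → ℕ} {u v w ℓ : ℕ}

lemma mem_infl_inflTime (h : v ∈ infl S t p ℓ) : v ∈ infl S t p (inflTime S t p v) :=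
  Nat.sInf_mem (s := {m | v ∈ infl S t p m}) ⟨ℓ, h⟩

lemma inflTime_le (h : v ∈ infl S t p ℓ) : inflTime S t p v ≤ ℓ :=
  Nat.sInf_le (s := {m | v ∈ infl S t p m}) h

lemma notMem_infl_of_lt_inflTime (h : ℓ < inflTime S t p v) : v ∉ infl S t p ℓ :=
  Nat.notMem_of_lt_sInf (s := {m | v ∈ infl S t p m}) h

lemma recv_asymm (h : recv S t p u w) : ¬ recv S t p w u :=
  lt_asymm h

lemma threshold_le_incentive_add_card_recv (h : v ∈ infl S t p ℓ) :
    t v ≤ p v + (({v - 1, v + 1} : Finset ℕ).filter (recv S t p v)).card := by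
  have hmem := mem_infl_inflTime h
  rcases hT : inflTime S t p v with _ | m
  · rw [hT] at hmem
    simp only [infl, mem_filter] at hmem
    omega
  · rw [hT] at hmem
    have hnew : v ∉ infl S t p m := notMem_infl_of_lt_inflTime (by omega)
    simp only [infl, mem_union, mem_filter] at hmem
    rcases hmem with hold | ⟨-, hcard⟩
    · exact absurd hold hnew
    · have hsub : (infl S t p m).filter (pAdj · v) ⊆
          ({v - 1, v + 1} : Finset ℕ).filter (recv S t p v) := by
        intro u hu
        rw [mem_filter] at hu ⊢
        have hu_time := inflTime_le hu.1
        refine ⟨?_, by unfold recv; omega⟩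
        rcases hu.2 with h | h <;> simp only [mem_insert, mem_singleton] <;> omega
      have := card_le_card hsub
      omega

end InfluenceProcess

lemma sum_Ico_add_le_of_add_succ_le_one (f g : ℕ → ℕ) (hfg : ∀ v, f v + g (v + 1) ≤ 1)
    {a b : ℕ} (hab : a < b) :
    ∑ v ∈ Ico a b, (g v + f v) ≤ b - a - 1 + g a + f (b - 1) := by
  induction b, hab using Nat.le_induction with
  | base => simp
  | succ b hab ih =>
    rw [sum_Ico_succ_top (by omega)]
    have := hfg (b - 1)
    rw [Nat.sub_add_cancel (by omega)] at this
    simp only [Nat.add_sub_cancel]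
    omega

theorem two_path_internal_incentive_lower_bounds_general (n lam j k : ℕ) (t p : ℕ → ℕ)
    (hjk : j + 1 < k) (hkn : k < n)
    (htint : ∀ i, j < i → i < k → t i = 2)
    (hcov : infl (range n) t p lam = range n) :
    (recv (range n) t p (j + 1) j ∧ recv (range n) t p (k - 1) k →
      k - j - 2 ≤ ∑ i ∈ Ioo j k, p i) ∧
    (Xor' (recv (range n) t p (j + 1) j) (recv (range n) t p (k - 1) k) →
      k - j - 1 ≤ ∑ i ∈ Ioo j k, p i) ∧
    (¬ recv (range n) t p (j + 1) j ∧ ¬ recv (range n) t p (k - 1) k →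
      k - j ≤ ∑ i ∈ Ioo j k, p i) := by
  set S := range n
  set back : ℕ → ℕ := fun v => if recv S t p v (v - 1) then 1 else 0
  set fwd : ℕ → ℕ := fun v => if recv S t p v (v + 1) then 1 else 0
  have hnode : ∀ v ∈ Ioo j k, 2 ≤ p v + (back v + fwd v) := by
    intro v hv
    rw [mem_Ioo] at hv
    have hinfl : v ∈ infl S t p lam := by rw [hcov]; exact mem_range.mpr (by omega)
    have := threshold_le_incentive_add_card_recv hinfl
    rwa [card_filter, sum_pair (by omega), htint v hv.1 hv.2] at this
  have hedge : ∀ v, fwd v + back (v + 1) ≤ 1 := by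
    intro v
    simp only [fwd, back, Nat.add_sub_cancel]
    split_ifs with h h' <;> first | omega | exact absurd h' (recv_asymm h)
  have hfirst : back (j + 1) = if recv S t p (j + 1) j then 1 else 0 := rfl
  have hlast : fwd (k - 1) = if recv S t p (k - 1) k then 1 else 0 := by
    simp only [fwd, Nat.sub_add_cancel (by omega : 1 ≤ k)]
  have hinterior := sum_Ico_add_le_of_add_succ_le_one fwd back hedge hjk
  have hcount := sum_le_sum hnode
  rw [Ico_add_one_left_eq_Ioo, hfirst, hlast] at hinterior
  rw [sum_const, Nat.card_Ioo, smul_eq_mul, sum_add_distrib] at hcount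
  have hbound : k - j ≤ ∑ i ∈ Ioo j k, p i +
      ((if recv S t p (j + 1) j then 1 else 0) + if recv S t p (k - 1) k then 1 else 0) := by
    omega
  refine ⟨fun ⟨hj, hk⟩ => ?_, fun hxor => ?_, fun ⟨hj, hk⟩ => ?_⟩
  · simp only [hj, hk, if_true] at hbound
    omega
  · rcases hxor with ⟨hj, hk⟩ | ⟨hk, hj⟩ <;> simp only [hj, hk, if_true, if_false] at hbound <;> omega
  · simp only [hj, hk, if_false] at hbound
    omega

/-- lower bounds on the incentives placed on the internal nodes of a
2-path `L(j,k)`, according to whether the extremal internal nodes `j+1` and `k-1`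
receive influence from the endpoints `j` and `k`. -/
theorem two_path_internal_incentive_lower_bounds (n lam j k : ℕ) (t p : ℕ → ℕ)
    (hjk : j + 1 < k) (hkn : k < n)
    (ht0 : t 0 = 1) (htn : t (n - 1) = 1) (htr : ∀ v < n, t v = 1 ∨ t v = 2)
    (htj : t j = 1) (htk : t k = 1) (htint : ∀ i, j < i → i < k → t i = 2)
    (hp : ∀ v < n, p v ≤ t v)
    (hcov : infl (range n) t p lam = range n) :
    (recv (range n) t p (j + 1) j ∧ recv (range n) t p (k - 1) k →
      k - j - 2 ≤ ∑ i ∈ Ioo j k, p i) ∧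
    (Xor' (recv (range n) t p (j + 1) j) (recv (range n) t p (k - 1) k) →
      k - j - 1 ≤ ∑ i ∈ Ioo j k, p i) ∧
    (¬ recv (range n) t p (j + 1) j ∧ ¬ recv (range n) t p (k - 1) k →
      k - j ≤ ∑ i ∈ Ioo j k, p i) :=
  two_path_internal_incentive_lower_bounds_general n lam j k t p hjk hkn htint hcov
end

section
/- In a sequence of node subsets modeling path influence: Σ_{i=j+1}^{k-1} inf(i) ≤ k−j if both j+1 and k−1 receive influence from j and k; ≤ k−j−1 if exactly one of them receives outer influence; ≤ k−j−2 otherwise; where inf(i) counts neighbors of i influenced before i. -/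
/-!
Every edge of the path transmits influence in at most one direction, so it adds at most one to
`∑ nInf`. Of the `k - j` edges of `L(j,k)`, the `k - j - 2` interior ones thus contribute at most
`k - j - 2`, while the boundary edges `(j, j+1)` and `(k-1, k)` contribute to an internal node
only when `j + 1`, resp. `k - 1`, receives influence from `j`, resp. `k`.
-/

open Finset

/-- `nInf S t p i` = number of neighbours of `i` influenced strictly before `i`. -/
noncomputable def nInf (S : Finset ℕ) (t p : ℕ → ℕ) (i : ℕ) : ℕ :=
  (S.filter fun u => pAdj u i ∧ inflTime S t p u < inflTime S t p i).card

theorem sum_range_succ_add_le_of_add_succ_le_one {a b : ℕ → ℕ} (h : ∀ r, b r + a (r + 1) ≤ 1)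
    (m : ℕ) : ∑ r ∈ range (m + 1), (a r + b r) ≤ a 0 + m + b m := by
  induction m with
  | zero => simp
  | succ m ih =>
    rw [sum_range_succ]
    have := h m
    omega

theorem card_filter_pAdj_lt_le (S : Finset ℕ) (T : ℕ → ℕ) (i : ℕ) :
    (S.filter fun u => pAdj u i ∧ T u < T i).card ≤
      (if T (i - 1) < T i then 1 else 0) + (if T (i + 1) < T i then 1 else 0) := by
  have hsub : (S.filter fun u => pAdj u i ∧ T u < T i) ⊆
      ({i - 1, i + 1} : Finset ℕ).filter fun u => T u < T i := by
    intro u hu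
    obtain ⟨-, hadj, hlt⟩ := mem_filter.1 hu
    refine mem_filter.2 ⟨?_, hlt⟩
    rcases hadj with rfl | rfl <;> simp
  calc _ ≤ (({i - 1, i + 1} : Finset ℕ).filter fun u => T u < T i).card := card_le_card hsub
    _ = _ := by rw [card_filter, sum_pair (by omega)]

theorem sum_Ioo_card_filter_pAdj_lt_le (S : Finset ℕ) (T : ℕ → ℕ) (j m : ℕ) :
    ∑ i ∈ Ioo j (j + 1 + m + 1), (S.filter fun u => pAdj u i ∧ T u < T i).card ≤
      (if T j < T (j + 1) then 1 else 0) + m +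
        (if T (j + 1 + m + 1) < T (j + 1 + m) then 1 else 0) := by
  rw [← Ico_add_one_left_eq_Ioo, sum_Ico_eq_sum_range, add_assoc (j + 1), Nat.add_sub_cancel_left]
  refine (sum_le_sum fun r _ => card_filter_pAdj_lt_le S T (j + 1 + r)).trans
    ((sum_range_succ_add_le_of_add_succ_le_one ?_ m).trans_eq ?_)
  · intro r
    simp only [← add_assoc, Nat.add_sub_cancel]
    split_ifs <;> omega
  · simp [add_assoc]

theorem two_path_received_influence_upper_bounds_general (n j k : ℕ) (t p : ℕ → ℕ)
    (hjk : j + 1 < k) :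
    (recv (range n) t p (j + 1) j ∧ recv (range n) t p (k - 1) k →
      ∑ i ∈ Ioo j k, nInf (range n) t p i ≤ k - j) ∧
    (Xor' (recv (range n) t p (j + 1) j) (recv (range n) t p (k - 1) k) →
      ∑ i ∈ Ioo j k, nInf (range n) t p i ≤ k - j - 1) ∧
    (¬ recv (range n) t p (j + 1) j ∧ ¬ recv (range n) t p (k - 1) k →
      ∑ i ∈ Ioo j k, nInf (range n) t p i ≤ k - j - 2) := by
  obtain ⟨m, rfl⟩ : ∃ m, k = j + 1 + m + 1 := ⟨k - j - 2, by omega⟩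
  have hsum : ∑ i ∈ Ioo j (j + 1 + m + 1), nInf (range n) t p i ≤ _ :=
    sum_Ioo_card_filter_pAdj_lt_le (range n) (inflTime (range n) t p) j m
  simp only [recv, Xor', xor_def, Nat.add_sub_cancel]
  split_ifs at hsum <;> exact ⟨fun _ => by omega, fun _ => by omega, fun _ => by omega⟩

/-- upper bounds on the total influence received by the internal nodes
of the subpath `L(j,k)`, according to whether `j+1` and `k-1` receive influence from
the endpoints `j` and `k`. -/
theorem two_path_received_influence_upper_bounds (n lam j k : ℕ) (t p : ℕ → ℕ)
    (hjk : j + 1 < k) (hkn : k < n)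
    (hcov : infl (range n) t p lam = range n) :
    (recv (range n) t p (j + 1) j ∧ recv (range n) t p (k - 1) k →
      ∑ i ∈ Ioo j k, nInf (range n) t p i ≤ k - j) ∧
    (Xor' (recv (range n) t p (j + 1) j) (recv (range n) t p (k - 1) k) →
      ∑ i ∈ Ioo j k, nInf (range n) t p i ≤ k - j - 1) ∧
    (¬ recv (range n) t p (j + 1) j ∧ ¬ recv (range n) t p (k - 1) k →
      ∑ i ∈ Ioo j k, nInf (range n) t p i ≤ k - j - 2) :=
  two_path_received_influence_upper_bounds_general n j k t p hjk
end

section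
/- Let OPT_{←}(j,k) be the optimal TBI cost on subpath L(j,k) assuming node k receives one unit of influence from node k+1, and OPT_{→ℓ}(j,k) the optimal cost assuming node k is influenced by round λ−ℓ without influence from k+1. If t(k)=1, then for all 1 ≤ ℓ < ℓ' ≤ λ: OPT_{←}(j,k) ≤ OPT(j,k) ≤ OPT_{→ℓ}(j,k) ≤ OPT_{→ℓ'}(j,k) ≤ OPT_{←}(j,k) + 1. -/
open Finset

/-- `OPT t lam j k`: minimum cost of incentives influencing all of the subpath
`L(j,k)` within `lam` rounds. -/
noncomputable def OPT (t : ℕ → ℕ) (lam j k : ℕ) : ℕ :=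
  sInf {c : ℕ | ∃ p : ℕ → ℕ, (∀ i ∈ Icc j k, p i ≤ t i) ∧
    infl (Icc j k) t p lam = Icc j k ∧ c = ∑ i ∈ Icc j k, p i}

/-- `OPTcon t lam j k ℓ v`: minimum cost of incentives influencing all of the subpath
`L(j,k)` within `lam` rounds, with the additional requirement that the endpoint `v` is
influenced by round `lam - ℓ` (using only influence from within `L(j,k)`). -/
noncomputable def OPTcon (t : ℕ → ℕ) (lam j k ℓ v : ℕ) : ℕ :=
  sInf {c : ℕ | ∃ p : ℕ → ℕ, (∀ i ∈ Icc j k, p i ≤ t i) ∧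
    infl (Icc j k) t p lam = Icc j k ∧ v ∈ infl (Icc j k) t p (lam - ℓ) ∧
    c = ∑ i ∈ Icc j k, p i}

/-- `OPTleft t lam j k`: as `OPT`, but the right endpoint `k` receives one unit of
influence from `k+1`, i.e. its threshold is reduced by one. -/
noncomputable def OPTleft (t : ℕ → ℕ) (lam j k : ℕ) : ℕ :=
  sInf {c : ℕ | ∃ p : ℕ → ℕ,
    (∀ i ∈ Icc j k, p i ≤ Function.update t k (t k - 1) i) ∧
    infl (Icc j k) (Function.update t k (t k - 1)) p lam = Icc j k ∧
    c = ∑ i ∈ Icc j k, p i}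

/-!
An optimal solution for `t` stays feasible once `t k` and `p k` are both lowered by one,
because influence only depends on whether `p v = t v` and on the slack `t v - p v`; this
gives `OPT_← ≤ OPT`. Conversely, when `t k = 1` an optimal solution for the lowered
threshold has `p k = 0`, and raising `p k` to `1` yields a solution for `t` of cost
`OPT_← + 1` in which `k` is influenced already at round `0`, hence before every deadline
`λ - ℓ'`. The two middle inequalities only shrink the feasible sets.
-/

open Function

lemma infl_subset (S : Finset ℕ) (t p : ℕ → ℕ) : ∀ m, infl S t p m ⊆ S
  | 0 => filter_subset _ _
  | m + 1 => union_subset (infl_subset S t p m) (filter_subset _ _)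

lemma infl_mono (S : Finset ℕ) (t p : ℕ → ℕ) : Monotone (infl S t p) :=
  monotone_nat_of_le_succ fun _ => subset_union_left

lemma infl_self (S : Finset ℕ) (t : ℕ → ℕ) (m : ℕ) : infl S t t m = S :=
  (infl_subset S t t m).antisymm <| by
    simpa [infl] using infl_mono S t t (Nat.zero_le m)

lemma infl_subset_infl_of_slack_le {S : Finset ℕ} {t₁ p₁ t₂ p₂ : ℕ → ℕ}
    (h_eq : ∀ v ∈ S, p₁ v = t₁ v → p₂ v = t₂ v)
    (h_slack : ∀ v ∈ S, t₂ v - p₂ v ≤ t₁ v - p₁ v) :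
    ∀ m, infl S t₁ p₁ m ⊆ infl S t₂ p₂ m
  | 0 => fun v hv => by
    rw [infl, mem_filter] at hv ⊢
    exact ⟨hv.1, h_eq v hv.1 hv.2⟩
  | m + 1 => by
    have ih := infl_subset_infl_of_slack_le h_eq h_slack m
    refine union_subset_union ih fun v hv => ?_
    rw [mem_filter] at hv ⊢
    exact ⟨hv.1, (h_slack v hv.1).trans <|
      hv.2.trans (card_le_card (filter_subset_filter _ ih))⟩

def Feasible (t : ℕ → ℕ) (lam j k : ℕ) (p : ℕ → ℕ) : Prop :=
  (∀ i ∈ Icc j k, p i ≤ t i) ∧ infl (Icc j k) t p lam = Icc j k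

section Feasible

variable {t p : ℕ → ℕ} {lam j k : ℕ}

lemma feasible_self (t : ℕ → ℕ) (lam j k : ℕ) : Feasible t lam j k t :=
  ⟨fun _ _ => le_rfl, infl_self _ _ _⟩

lemma Feasible.of_slack_le {t₁ p₁ : ℕ → ℕ} (hp : Feasible t₁ lam j k p₁)
    (h_le : ∀ i ∈ Icc j k, p i ≤ t i)
    (h_eq : ∀ v ∈ Icc j k, p₁ v = t₁ v → p v = t v)
    (h_slack : ∀ v ∈ Icc j k, t v - p v ≤ t₁ v - p₁ v) :
    Feasible t lam j k p := by
  have h := infl_subset_infl_of_slack_le h_eq h_slack lam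
  rw [hp.2] at h
  exact ⟨h_le, (infl_subset _ _ _ _).antisymm h⟩

lemma Feasible.update_pred (hp : Feasible t lam j k p) (v : ℕ) :
    Feasible (update t v (t v - 1)) lam j k (update p v (p v - 1)) := by
  refine hp.of_slack_le (fun i hi => ?_) (fun i _ hi => ?_) (fun i _ => ?_) <;>
    rcases eq_or_ne i v with rfl | hne <;>
    simp only [update_self, update_of_ne, ne_eq, not_false_eq_true, le_refl, *]
  · exact Nat.sub_le_sub_right (hp.1 i hi) 1
  · exact hp.1 i hi
  · omega

lemma Feasible.update_succ (hv : 1 ≤ t v)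
    (hp : Feasible (update t v (t v - 1)) lam j k p) :
    Feasible t lam j k (update p v (p v + 1)) := by
  refine hp.of_slack_le (fun i hi => ?_) (fun i hi hpi => ?_) (fun i hi => ?_) <;>
    have hle := hp.1 i hi <;>
    rcases eq_or_ne i v with rfl | hne <;>
    simp_all only [update_self, update_of_ne, ne_eq, not_false_eq_true, le_refl]
  all_goals omega

end Feasible

section Optimum

variable {t p : ℕ → ℕ} {lam j k ℓ v : ℕ}

lemma OPTleft_eq_OPT (t : ℕ → ℕ) (lam j k : ℕ) :
    OPTleft t lam j k = OPT (update t k (t k - 1)) lam j k :=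
  rfl

lemma OPT_le (hp : Feasible t lam j k p) : OPT t lam j k ≤ ∑ i ∈ Icc j k, p i :=
  Nat.sInf_le ⟨p, hp.1, hp.2, rfl⟩

lemma exists_feasible_sum_eq_OPT (t : ℕ → ℕ) (lam j k : ℕ) :
    ∃ p, Feasible t lam j k p ∧ ∑ i ∈ Icc j k, p i = OPT t lam j k := by
  have h : OPT t lam j k ∈ _ := Nat.sInf_mem ⟨_, t, (feasible_self t lam j k).1,
    (feasible_self t lam j k).2, rfl⟩
  obtain ⟨p, hle, hinfl, hcost⟩ := h
  exact ⟨p, ⟨hle, hinfl⟩, hcost.symm⟩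

lemma OPTcon_le (hp : Feasible t lam j k p) (hv : v ∈ infl (Icc j k) t p (lam - ℓ)) :
    OPTcon t lam j k ℓ v ≤ ∑ i ∈ Icc j k, p i :=
  Nat.sInf_le ⟨p, hp.1, hp.2, hv, rfl⟩

lemma exists_feasible_sum_eq_OPTcon (hv : v ∈ Icc j k) :
    ∃ p, Feasible t lam j k p ∧ v ∈ infl (Icc j k) t p (lam - ℓ) ∧
      ∑ i ∈ Icc j k, p i = OPTcon t lam j k ℓ v := by
  have h : OPTcon t lam j k ℓ v ∈ _ := Nat.sInf_mem ⟨_, t, (feasible_self t lam j k).1,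
    (feasible_self t lam j k).2, (infl_self _ t _).symm ▸ hv, rfl⟩
  obtain ⟨p, hle, hinfl, hvp, hcost⟩ := h
  exact ⟨p, ⟨hle, hinfl⟩, hvp, hcost.symm⟩

lemma OPT_update_pred_le (t : ℕ → ℕ) (lam j k v : ℕ) :
    OPT (update t v (t v - 1)) lam j k ≤ OPT t lam j k := by
  obtain ⟨p, hp, hcost⟩ := exists_feasible_sum_eq_OPT t lam j k
  calc OPT (update t v (t v - 1)) lam j k ≤ ∑ i ∈ Icc j k, update p v (p v - 1) i :=
        OPT_le (hp.update_pred v)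
    _ ≤ ∑ i ∈ Icc j k, p i := sum_le_sum fun i _ => by
        rcases eq_or_ne i v with rfl | hne <;> simp [update_of_ne, *]
    _ = OPT t lam j k := hcost

lemma OPT_le_OPTcon (hv : v ∈ Icc j k) : OPT t lam j k ≤ OPTcon t lam j k ℓ v := by
  obtain ⟨p, hp, -, hcost⟩ := exists_feasible_sum_eq_OPTcon (t := t) (lam := lam) (ℓ := ℓ) hv
  exact hcost ▸ OPT_le hp

lemma OPTcon_mono {ℓ' : ℕ} (hv : v ∈ Icc j k) (h : ℓ ≤ ℓ') :
    OPTcon t lam j k ℓ v ≤ OPTcon t lam j k ℓ' v := by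
  obtain ⟨p, hp, hvp, hcost⟩ :=
    exists_feasible_sum_eq_OPTcon (t := t) (lam := lam) (ℓ := ℓ') hv
  exact hcost ▸ OPTcon_le hp (infl_mono _ _ _ (Nat.sub_le_sub_left h lam) hvp)

end Optimum

theorem opt_variants_chain_general (lam j k ℓ ℓ' : ℕ) (t : ℕ → ℕ)
    (hjk : j ≤ k) (htk : t k = 1)
    (h2 : ℓ < ℓ') :
    OPTleft t lam j k ≤ OPT t lam j k ∧
    OPT t lam j k ≤ OPTcon t lam j k ℓ k ∧
    OPTcon t lam j k ℓ k ≤ OPTcon t lam j k ℓ' k ∧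
    OPTcon t lam j k ℓ' k ≤ OPTleft t lam j k + 1 := by
  have hk : k ∈ Icc j k := mem_Icc.2 ⟨hjk, le_rfl⟩
  refine ⟨OPT_update_pred_le t lam j k k, OPT_le_OPTcon hk, OPTcon_mono hk h2.le, ?_⟩
  obtain ⟨p, hp, hcost⟩ := exists_feasible_sum_eq_OPT (update t k (t k - 1)) lam j k
  have hpk : p k = 0 := by simpa [htk] using hp.1 k hk
  have hk₀ : k ∈ infl (Icc j k) t (update p k (p k + 1)) 0 := by
    simp [infl, hk, hpk, htk]
  calc OPTcon t lam j k ℓ' k ≤ ∑ i ∈ Icc j k, update p k (p k + 1) i :=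
        OPTcon_le (hp.update_succ htk.ge) (infl_mono _ _ _ (Nat.zero_le _) hk₀)
    _ = OPTleft t lam j k + 1 := by
        rw [sum_update_of_mem hk, OPTleft_eq_OPT, ← hcost, ← add_sum_erase _ _ hk,
          sdiff_singleton_eq_erase, hpk]
        ring

/-- if `t k = 1` then for all `1 ≤ ℓ < ℓ' ≤ lam`,
`OPT_←(j,k) ≤ OPT(j,k) ≤ OPT_→ℓ(j,k) ≤ OPT_→ℓ'(j,k) ≤ OPT_←(j,k) + 1`. -/
theorem opt_variants_chain (n lam j k ℓ ℓ' : ℕ) (t : ℕ → ℕ)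
    (hjk : j ≤ k) (hkn : k < n) (htr : ∀ v < n, t v = 1 ∨ t v = 2) (htk : t k = 1)
    (h1 : 1 ≤ ℓ) (h2 : ℓ < ℓ') (h3 : ℓ' ≤ lam) :
    OPTleft t lam j k ≤ OPT t lam j k ∧
    OPT t lam j k ≤ OPTcon t lam j k ℓ k ∧
    OPTcon t lam j k ℓ k ≤ OPTcon t lam j k ℓ' k ∧
    OPTcon t lam j k ℓ' k ≤ OPTleft t lam j k + 1 :=
  opt_variants_chain_general lam j k ℓ ℓ' t hjk htk h2
end

section
/- For λ ≥ 2, if m = k−j−1 is odd, the internal nodes of a 2-path L(j,k) can be influenced within λ rounds at total internal cost k−j−2 via the incentive pattern 0(20)* (incentive 0 to the first internal node, then alternating 2,0), provided both endpoints j and k are influenced by round λ−1. -/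
/-
Round 0 already influences every internal node at even distance from `j`, since it receives
incentive `2 = t`. Because `m = k - j - 1` is odd, the neighbours of an internal node at odd
distance are `j`, `k` or nodes at even distance, all influenced by round `λ - 1`; with incentive
`0` such a node needs both neighbours, so it is influenced in round `λ`. The incentives `2` sit
on the `(m - 1) / 2` nodes at even distance, which costs `m - 1 = k - j - 2`.
-/

open Finset

section Influence

variable {S : Finset ℕ} {t p : ℕ → ℕ}

lemma infl_monotone : Monotone (infl S t p) :=
  monotone_nat_of_le_succ fun _ => by rw [infl]; exact subset_union_left

lemma mem_infl_zero {v : ℕ} (hv : v ∈ S) (hp : p v = t v) : v ∈ infl S t p 0 := by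
  rw [infl]; exact mem_filter.mpr ⟨hv, hp⟩

lemma mem_infl_succ_of_neighbours {ℓ v : ℕ} (hv : v + 1 ∈ S)
    (ht : t (v + 1) - p (v + 1) ≤ 2) (hl : v ∈ infl S t p ℓ) (hr : v + 2 ∈ infl S t p ℓ) :
    v + 1 ∈ infl S t p (ℓ + 1) := by
  have hcard : 2 ≤ ((infl S t p ℓ).filter fun u => pAdj u (v + 1)).card :=
    one_lt_card.mpr ⟨v, mem_filter.mpr ⟨hl, Or.inl rfl⟩, v + 2,
      mem_filter.mpr ⟨hr, Or.inr rfl⟩, by omega⟩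
  rw [infl]
  exact mem_union_right _ (mem_filter.mpr ⟨hv, ht.trans hcard⟩)

end Influence

lemma sum_Ioo_ite_even_sub (j k : ℕ) :
    ∑ i ∈ Ioo j k, (if (i - j) % 2 = 0 then 2 else 0) = 2 * ((k - j - 1) / 2) := by
  induction k with
  | zero => simp
  | succ k ih =>
    rw [Ioo_add_one_right_eq_Ioc]
    rcases Nat.lt_or_ge j k with hjk | hkj
    · rw [← Ioo_insert_right hjk, sum_insert (by simp), ih]
      split_ifs <;> omega
    · rw [Ioc_eq_empty (by omega), sum_empty]; omega

theorem two_path_odd_pattern_general (n lam j k : ℕ) (t p : ℕ → ℕ)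
    (hlam : 2 ≤ lam) (hkn : k < n)
    (htint : ∀ i, j < i → i < k → t i = 2)
    (hodd : Odd (k - j - 1))
    (hpat : ∀ i, j < i → i < k → p i = if (i - j) % 2 = 0 then 2 else 0)
    (hj : j ∈ infl (range n) t p (lam - 1))
    (hk : k ∈ infl (range n) t p (lam - 1)) :
    (∀ i ∈ Ioo j k, i ∈ infl (range n) t p lam) ∧
    ∑ i ∈ Ioo j k, p i = k - j - 2 := by
  have hm : (k - j - 1) % 2 = 1 := Nat.odd_iff.mp hodd
  have hround0 : ∀ i, j < i → i < k → (i - j) % 2 = 0 → i ∈ infl (range n) t p 0 :=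
    fun i hji hik he => mem_infl_zero (mem_range.mpr (by omega))
      (by rw [hpat i hji hik, htint i hji hik, if_pos he])
  have hbefore : ∀ i, j ≤ i → i ≤ k → (i - j) % 2 = 0 →
      i ∈ infl (range n) t p (lam - 1) := by
    intro i hji hik he
    rcases hji.eq_or_lt with rfl | hji
    · exact hj
    rcases hik.eq_or_lt with rfl | hik
    · exact hk
    exact infl_monotone (Nat.zero_le _) (hround0 i hji hik he)
  refine ⟨fun i hi => ?_, ?_⟩
  · obtain ⟨hji, hik⟩ := mem_Ioo.mp hi
    rcases Nat.mod_two_eq_zero_or_one (i - j) with he | ho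
    · exact infl_monotone (Nat.zero_le _) (hround0 i hji hik he)
    obtain ⟨v, rfl⟩ : ∃ v, i = v + 1 := ⟨i - 1, by omega⟩
    have hstep := mem_infl_succ_of_neighbours (mem_range.mpr (by omega))
      (by rw [htint _ hji hik, hpat _ hji hik, if_neg (by omega)])
      (hbefore v (by omega) (by omega) (by omega))
      (hbefore (v + 2) (by omega) (by omega) (by omega))
    rwa [Nat.sub_add_cancel (by omega)] at hstep
  · rw [sum_congr rfl fun i hi => hpat i (mem_Ioo.mp hi).1 (mem_Ioo.mp hi).2,
      sum_Ioo_ite_even_sub]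
    omega

/-- for `lam ≥ 2` and `m = k-j-1` odd, the incentive pattern `0(20)*` on
the internal nodes of a 2-path `L(j,k)` has internal cost `k-j-2` and influences all
internal nodes within `lam` rounds, provided both endpoints `j` and `k` are influenced
by round `lam - 1`. -/
theorem two_path_odd_pattern (n lam j k : ℕ) (t p : ℕ → ℕ)
    (hlam : 2 ≤ lam) (hjk : j + 1 < k) (hkn : k < n)
    (htj : t j = 1) (htk : t k = 1) (htint : ∀ i, j < i → i < k → t i = 2)
    (hodd : Odd (k - j - 1))
    (hpat : ∀ i, j < i → i < k → p i = if (i - j) % 2 = 0 then 2 else 0)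
    (hj : j ∈ infl (range n) t p (lam - 1))
    (hk : k ∈ infl (range n) t p (lam - 1)) :
    (∀ i ∈ Ioo j k, i ∈ infl (range n) t p lam) ∧
    ∑ i ∈ Ioo j k, p i = k - j - 2 :=
  two_path_odd_pattern_general n lam j k t p hlam hkn htint hodd hpat hj hk
end
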